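/- Let k be a quasi-complete totally ordered rational tropical semifield and let M be a straight k-module. Then both the dual module M∨ and the module of locators Loc(M) are straight. -/

import Mathlib

/-! # Tropical semifields and tropical modules -/

/-- A tropical semifield: a commutative semiring with idempotent addition
(`⊕` is `+`, `⊙` is `*`, the zero element `−∞` is `0`, the unity is `1`)
in which every nonzero element has a multiplicative inverse. -/
class TropSemifield (k : Type*) extends CommSemiring k where
  add_idem : ∀ a : k, a + a = a
  exists_inv : ∀ a : k, a ≠ 0 → ∃ b : k, a * b = 1

/-- A tropical semigroup: commutative idempotent monoid, written additively
(the zero element is `−∞`). -/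
class TropSemigroup (M : Type*) extends AddCommMonoid M where
  add_idem : ∀ v : M, v + v = v

/-- A module over a tropical semifield. -/
class TropModule (k : Type*) (M : Type*) [TropSemifield k] [TropSemigroup M] extends
    SMul k M where
  mul_smul : ∀ (a b : k) (v : M), (a * b) • v = a • b • v
  one_smul : ∀ v : M, (1 : k) • v = v
  add_smul : ∀ (a b : k) (v : M), (a + b) • v = a • v + b • v
  smul_add : ∀ (a : k) (v w : M), a • (v + w) = a • v + a • w
  zero_smul : ∀ v : M, (0 : k) • v = 0
  smul_zero : ∀ a : k, a • (0 : M) = 0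

/-- The canonical partial order `v ≤ w ↔ v ⊕ w = w`. -/
def tle {M : Type*} [Add M] (v w : M) : Prop := v + w = w

/-- Strict version of the canonical order. -/
def tlt {M : Type*} [Add M] (v w : M) : Prop := tle v w ∧ v ≠ w

/-- The canonical order of `k` is total. -/
def TotallyOrderedTSF (k : Type*) [TropSemifield k] : Prop :=
  ∀ a b : k, tle a b ∨ tle b a

/-- Every nonempty subset of `k` admits an infimum. -/
def QuasiCompleteTSF (k : Type*) [TropSemifield k] : Prop :=
  ∀ S : Set k, S.Nonempty →
    ∃ c : k, (∀ x ∈ S, tle c x) ∧ ∀ d : k, (∀ x ∈ S, tle d x) → tle d c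

/-- `k` is rational: `m`-th roots exist and `k` has no maximum element. -/
def RationalTSF (k : Type*) [TropSemifield k] : Prop :=
  (∀ (a : k) (m : ℕ), m ≠ 0 → ∃ b : k, b ^ m = a) ∧ ∀ a : k, ∃ b : k, tlt a b

instance (priority := 100) TropSemifield.toTropSemigroup (k : Type*) [TropSemifield k] :
    TropSemigroup k :=
  { (inferInstance : AddCommMonoid k) with add_idem := TropSemifield.add_idem }

instance TropModule.self (k : Type*) [TropSemifield k] : TropModule k k :=
  { (inferInstance : SMul k k) with
    mul_smul := fun a b v => mul_assoc a b v
    one_smul := fun v => one_mul v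
    add_smul := fun a b v => add_mul a b v
    smul_add := fun a v w => mul_add a v w
    zero_smul := fun v => zero_mul v
    smul_zero := fun a => mul_zero a }

instance TropSemigroup.pi {ι : Type*} (M : Type*) [TropSemigroup M] :
    TropSemigroup (ι → M) :=
  { Pi.addCommMonoid with add_idem := fun v => funext fun i => TropSemigroup.add_idem (v i) }

instance TropModule.pi (k : Type*) {ι : Type*} (M : Type*) [TropSemifield k] [TropSemigroup M]
    [TropModule k M] : TropModule k (ι → M) where
  smul a v := fun i => a • v i
  mul_smul a b v := funext fun i => TropModule.mul_smul a b (v i)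
  one_smul v := funext fun i => TropModule.one_smul (v i)
  add_smul a b v := funext fun i => TropModule.add_smul a b (v i)
  smul_add a v w := funext fun i => TropModule.smul_add a (v i) (w i)
  zero_smul v := funext fun i => TropModule.zero_smul (v i)
  smul_zero a := funext fun i => TropModule.smul_zero (a := a)

/-! ## Homomorphisms of tropical modules -/

/-- A homomorphism of `k`-modules. -/
structure TropHom (k : Type*) (M : Type*) (N : Type*) [TropSemifield k] [TropSemigroup M]
    [TropModule k M] [TropSemigroup N] [TropModule k N] where
  toFun : M → N
  map_zero' : toFun 0 = 0
  map_add' : ∀ v w : M, toFun (v + w) = toFun v + toFun w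
  map_smul' : ∀ (a : k) (v : M), toFun (a • v) = a • toFun v

namespace TropHom

variable {k M N : Type*} [TropSemifield k] [TropSemigroup M] [TropModule k M]
  [TropSemigroup N] [TropModule k N]

theorem ext' {f g : TropHom k M N} (h : ∀ v, f.toFun v = g.toFun v) : f = g := by
  cases f; cases g
  simp only [mk.injEq]
  exact funext h

instance : Zero (TropHom k M N) :=
  ⟨⟨fun _ => 0, rfl, fun _ _ => (add_zero (0 : N)).symm,
    fun a _ => (TropModule.smul_zero (M := N) a).symm⟩⟩

instance : Add (TropHom k M N) :=
  ⟨fun f g =>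
    { toFun := fun v => f.toFun v + g.toFun v
      map_zero' := by
        show f.toFun 0 + g.toFun 0 = 0
        rw [f.map_zero', g.map_zero', add_zero]
      map_add' := fun v w => by
        show f.toFun (v + w) + g.toFun (v + w) =
          (f.toFun v + g.toFun v) + (f.toFun w + g.toFun w)
        rw [f.map_add', g.map_add', add_add_add_comm]
      map_smul' := fun a v => by
        show f.toFun (a • v) + g.toFun (a • v) = a • (f.toFun v + g.toFun v)
        rw [f.map_smul', g.map_smul', TropModule.smul_add] }⟩

instance : SMul k (TropHom k M N) :=
  ⟨fun a f =>
    { toFun := fun v => a • f.toFun v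
      map_zero' := by
        show a • f.toFun 0 = 0
        rw [f.map_zero', TropModule.smul_zero]
      map_add' := fun v w => by
        show a • f.toFun (v + w) = a • f.toFun v + a • f.toFun w
        rw [f.map_add', TropModule.smul_add]
      map_smul' := fun b v => by
        show a • f.toFun (b • v) = b • (a • f.toFun v)
        rw [f.map_smul', ← TropModule.mul_smul, ← TropModule.mul_smul, mul_comm a b] }⟩

instance : TropSemigroup (TropHom k M N) where
  add := (· + ·)
  zero := 0
  add_assoc f g h := ext' fun v => add_assoc (f.toFun v) (g.toFun v) (h.toFun v)
  zero_add f := ext' fun v => zero_add (f.toFun v)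
  add_zero f := ext' fun v => add_zero (f.toFun v)
  add_comm f g := ext' fun v => add_comm (f.toFun v) (g.toFun v)
  nsmul := nsmulRec
  add_idem f := ext' fun v => TropSemigroup.add_idem (f.toFun v)

instance : TropModule k (TropHom k M N) where
  smul := (· • ·)
  mul_smul a b f := ext' fun v => TropModule.mul_smul a b (f.toFun v)
  one_smul f := ext' fun v => TropModule.one_smul (f.toFun v)
  add_smul a b f := ext' fun v => TropModule.add_smul a b (f.toFun v)
  smul_add a f g := ext' fun v => TropModule.smul_add a (f.toFun v) (g.toFun v)
  zero_smul f := ext' fun v => TropModule.zero_smul (f.toFun v)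
  smul_zero a := ext' fun v => TropModule.smul_zero (M := N) a

end TropHom

/-- The canonical map `M → (M∨)∨`, `v ↦ (ξ ↦ ⟨v, ξ⟩)`. -/
def iotaFun (k : Type*) (M : Type*) [TropSemifield k] [TropSemigroup M] [TropModule k M] :
    M → TropHom k (TropHom k M k) k :=
  fun v => ⟨fun ξ => ξ.toFun v, rfl, fun ξ η => rfl, fun a ξ => rfl⟩

/-! ## Order-theoretic notions -/

/-- `z` is the infimum of `v` and `w` w.r.t. the canonical order. -/
def IsTInf {M : Type*} [Add M] (v w z : M) : Prop :=
  tle z v ∧ tle z w ∧ ∀ y : M, tle y v → tle y w → tle y z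

/-- A tropical module is straight if it is a finitely distributive ordered lattice. -/
def Straight (M : Type*) [Add M] : Prop :=
  (∀ v w : M, ∃ z : M, IsTInf v w z) ∧
    ∀ v₁ v₂ w z₁ z₂ : M, IsTInf v₁ w z₁ → IsTInf v₂ w z₂ → IsTInf (v₁ + v₂) w (z₁ + z₂)

/-- Infimum of `v` and `w` within the subset `N`. -/
def IsTInfOn {M : Type*} [Add M] (N : Set M) (v w z : M) : Prop :=
  tle z v ∧ tle z w ∧ ∀ y ∈ N, tle y v → tle y w → tle y z

/-- A submodule (viewed as a subset) is straight. -/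
def StraightSet {M : Type*} [Add M] (N : Set M) : Prop :=
  (∀ v ∈ N, ∀ w ∈ N, ∃ z ∈ N, IsTInfOn N v w z) ∧
    ∀ v₁ ∈ N, ∀ v₂ ∈ N, ∀ w ∈ N, ∀ z₁ ∈ N, ∀ z₂ ∈ N,
      IsTInfOn N v₁ w z₁ → IsTInfOn N v₂ w z₂ → IsTInfOn N (v₁ + v₂) w (z₁ + z₂)

/-! ## Generation, bases, extremal elements -/

/-- `S` generates the `k`-module `M`. -/
def TGenerates (k : Type*) {M : Type*} [TropSemifield k] [TropSemigroup M] [TropModule k M]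
    (S : Set M) : Prop :=
  ∀ v : M, ∃ (r : ℕ) (a : Fin r → k) (x : Fin r → M), (∀ i, x i ∈ S) ∧ v = ∑ i, a i • x i

/-- `M` is finitely generated. -/
def TFG (k : Type*) (M : Type*) [TropSemifield k] [TropSemigroup M] [TropModule k M] : Prop :=
  ∃ S : Finset M, TGenerates k (↑S : Set M)

/-- A basis: a generating set no proper subset of which generates. -/
def TBasis (k : Type*) {M : Type*} [TropSemifield k] [TropSemigroup M] [TropModule k M]
    (S : Set M) : Prop :=
  TGenerates k S ∧ ∀ T : Set M, T ⊂ S → ¬ TGenerates k T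

/-- `S` generates the subset `N` (viewed as a submodule of `M`). -/
def TGeneratesOn (k : Type*) {M : Type*} [TropSemifield k] [TropSemigroup M] [TropModule k M]
    (N S : Set M) : Prop :=
  ∀ v ∈ N, ∃ (r : ℕ) (a : Fin r → k) (x : Fin r → M), (∀ i, x i ∈ S) ∧ v = ∑ i, a i • x i

/-- A basis of the submodule `N ⊆ M`. -/
def TBasisOn (k : Type*) {M : Type*} [TropSemifield k] [TropSemigroup M] [TropModule k M]
    (N S : Set M) : Prop :=
  S ⊆ N ∧ TGeneratesOn k N S ∧ ∀ T : Set M, T ⊂ S → ¬ TGeneratesOn k N T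

/-- An extremal element. -/
def TExtremal {M : Type*} [Add M] [Zero M] (e : M) : Prop :=
  e ≠ 0 ∧ ∀ v w : M, v + w = e → v = e ∨ w = e

/-- The ray `k ⊙ e` generated by an element. -/
def tray (k : Type*) {M : Type*} [TropSemifield k] [TropSemigroup M] [TropModule k M]
    (e : M) : Set M :=
  Set.range fun a : k => a • e

/-- The set of extremal rays of `M`. -/
def extRays (k : Type*) (M : Type*) [TropSemifield k] [TropSemigroup M] [TropModule k M] :
    Set (Set M) :=
  {R : Set M | ∃ e : M, TExtremal e ∧ R = tray k e}

/-- The dimension of a straight reflexive module: the number of extremal rays. -/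
noncomputable def tdim (k : Type*) (M : Type*) [TropSemifield k] [TropSemigroup M]
    [TropModule k M] : ℕ :=
  (extRays k M).ncard

/-! ## Further notions on homomorphisms -/

/-- A lightly surjective homomorphism. -/
def LightlySurjective {k M N : Type*} [TropSemifield k] [TropSemigroup M] [TropModule k M]
    [TropSemigroup N] [TropModule k N] (α : TropHom k M N) : Prop :=
  ∀ w : N, ∃ v : M, tle w (α.toFun v)

/-- A lattice-preserving homomorphism. -/
def LatticePreserving {k M N : Type*} [TropSemifield k] [TropSemigroup M] [TropModule k M]
    [TropSemigroup N] [TropModule k N] (α : TropHom k M N) : Prop :=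
  ∀ v w : M, ∀ x : N, tle x (α.toFun v) → tle x (α.toFun w) →
    ∃ y : M, tle y v ∧ tle y w ∧ tle x (α.toFun y)

/-- The inclusion of the subset `N` into the ambient module is lattice-preserving. -/
def LatPresSet {M : Type*} [Add M] (N : Set M) : Prop :=
  ∀ v ∈ N, ∀ w ∈ N, ∀ x : M, tle x v → tle x w → ∃ y ∈ N, tle y v ∧ tle y w ∧ tle x y

/-- `η` is the dual element of `e`: `⟨e,η⟩ = 0` and
`⟨v,η⟩ ⊙ ⟨e,ξ⟩ ≤ ⟨v,ξ⟩` for all `v`, `ξ`. -/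
def IsDualElement {k M : Type*} [TropSemifield k] [TropSemigroup M] [TropModule k M]
    (e : M) (η : TropHom k M k) : Prop :=
  η.toFun e = 1 ∧ ∀ (v : M) (ξ : TropHom k M k), tle (η.toFun v * ξ.toFun e) (ξ.toFun v)

/-! ## Locators -/

/-- A locator of `M`: a lower-saturated subsemigroup of `(M, ⊕)` that generates `M`. -/
structure IsLocator (k : Type*) {M : Type*} [TropSemifield k] [TropSemigroup M] [TropModule k M]
    (S : Set M) : Prop where
  lower : ∀ v w : M, tle v w → w ∈ S → v ∈ S
  add_mem : ∀ v ∈ S, ∀ w ∈ S, v + w ∈ S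
  generates : TGenerates k S

/-- The multiplicative inverse `⊘a` (junk value `−∞` at `−∞`). -/
noncomputable def tinv {k : Type*} [TropSemifield k] (a : k) : k := by
  classical exact if h : a = 0 then 0 else Classical.choose (TropSemifield.exists_inv a h)

/-- Scalar multiplication on locators: `a ⊙̌ S = (⊘a) ⊙ S` for `a ≠ −∞`, `(−∞) ⊙̌ S = M`. -/
noncomputable def locSMul {k M : Type*} [TropSemifield k] [TropSemigroup M] [TropModule k M]
    (a : k) (S : Set M) : Set M := by
  classical exact if a = 0 then Set.univ else (fun v => tinv a • v) '' S

/-- `U` is the infimum of the locators `S`, `T` in `Loc(M)` (whose canonical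
order is reverse inclusion, the sum being intersection). -/
def IsLocInf (k : Type*) {M : Type*} [TropSemifield k] [TropSemigroup M] [TropModule k M]
    (S T U : Set M) : Prop :=
  IsLocator k U ∧ S ⊆ U ∧ T ⊆ U ∧
    ∀ W : Set M, IsLocator k W → S ⊆ W → T ⊆ W → U ⊆ W

/-! ## Submodules -/

/-- A subset of a `k`-module which is a submodule. -/
structure IsTSubmodule (k : Type*) {M : Type*} [TropSemifield k] [TropSemigroup M]
    [TropModule k M] (N : Set M) : Prop where
  zero_mem : (0 : M) ∈ N
  add_mem : ∀ v ∈ N, ∀ w ∈ N, v + w ∈ N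
  smul_mem : ∀ (a : k), ∀ v ∈ N, a • v ∈ N

/-- A bundled submodule of a `k`-module. -/
structure TSub (k : Type*) (M : Type*) [TropSemifield k] [TropSemigroup M] [TropModule k M] where
  carrier : Set M
  zero_mem : (0 : M) ∈ carrier
  add_mem : ∀ v ∈ carrier, ∀ w ∈ carrier, v + w ∈ carrier
  smul_mem : ∀ (a : k), ∀ v ∈ carrier, a • v ∈ carrier

instance TSub.instZero {k M : Type*} [TropSemifield k] [TropSemigroup M] [TropModule k M]
    (N : TSub k M) : Zero ↥N.carrier :=
  ⟨⟨0, N.zero_mem⟩⟩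

instance TSub.instAdd {k M : Type*} [TropSemifield k] [TropSemigroup M] [TropModule k M]
    (N : TSub k M) : Add ↥N.carrier :=
  ⟨fun v w => ⟨v.1 + w.1, N.add_mem v.1 v.2 w.1 w.2⟩⟩

instance TSub.instSMul {k M : Type*} [TropSemifield k] [TropSemigroup M] [TropModule k M]
    (N : TSub k M) : SMul k ↥N.carrier :=
  ⟨fun a v => ⟨a • v.1, N.smul_mem a v.1 v.2⟩⟩

instance TSub.semigroup {k M : Type*} [TropSemifield k] [TropSemigroup M] [TropModule k M]
    (N : TSub k M) : TropSemigroup ↥N.carrier where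
  add := (· + ·)
  zero := 0
  add_assoc a b c := Subtype.ext (add_assoc a.1 b.1 c.1)
  zero_add a := Subtype.ext (zero_add a.1)
  add_zero a := Subtype.ext (add_zero a.1)
  add_comm a b := Subtype.ext (add_comm a.1 b.1)
  nsmul := nsmulRec
  add_idem a := Subtype.ext (TropSemigroup.add_idem a.1)

instance TSub.module {k M : Type*} [TropSemifield k] [TropSemigroup M] [TropModule k M]
    (N : TSub k M) : TropModule k ↥N.carrier where
  smul := (· • ·)
  mul_smul a b v := Subtype.ext (TropModule.mul_smul a b v.1)
  one_smul v := Subtype.ext (TropModule.one_smul v.1)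
  add_smul a b v := Subtype.ext (TropModule.add_smul a b v.1)
  smul_add a v w := Subtype.ext (TropModule.smul_add a v.1 w.1)
  zero_smul v := Subtype.ext (TropModule.zero_smul v.1)
  smul_zero a := Subtype.ext (TropModule.smul_zero (M := M) a)

/-! ## Linear combinations -/

theorem tsmul_sum {k M : Type*} [TropSemifield k] [TropSemigroup M] [TropModule k M]
    (a : k) {ι : Type*} (s : Finset ι) (f : ι → M) :
    a • (∑ i ∈ s, f i) = ∑ i ∈ s, a • f i := by
  classical
  induction s using Finset.induction_on with
  | empty => simpa using TropModule.smul_zero (M := M) a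
  | insert _ _ h ih => rw [Finset.sum_insert h, Finset.sum_insert h, TropModule.smul_add, ih]

/-- The homomorphism `kⁿ → M` sending the `i`-th standard basis element to `e i`. -/
def linComb {k M : Type*} [TropSemifield k] [TropSemigroup M] [TropModule k M] {n : ℕ}
    (e : Fin n → M) : TropHom k (Fin n → k) M where
  toFun v := ∑ i, v i • e i
  map_zero' :=
    (Finset.sum_congr rfl fun i _ => TropModule.zero_smul (e i)).trans Finset.sum_const_zero
  map_add' v w := by
    rw [← Finset.sum_add_distrib]
    exact Finset.sum_congr rfl fun i _ => TropModule.add_smul (v i) (w i) (e i)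
  map_smul' a v := by
    rw [tsmul_sum]
    exact Finset.sum_congr rfl fun i _ => TropModule.mul_smul a (v i) (e i)

/-- The homomorphism `M → kⁿ` induced by an `n`-tuple of elements of `M∨`. -/
def dualTuple {k M : Type*} [TropSemifield k] [TropSemigroup M] [TropModule k M] {n : ℕ}
    (η : Fin n → TropHom k M k) : TropHom k M (Fin n → k) where
  toFun v := fun i => (η i).toFun v
  map_zero' := funext fun i => (η i).map_zero'
  map_add' v w := funext fun i => (η i).map_add' v w
  map_smul' a v := funext fun i => (η i).map_smul' a v

/-!
The infimum of `ξ, η ∈ M∨` is the inf-convolution `v ↦ inf {ξ v₁ ⊕ η v₂ | v₁ ⊕ v₂ = v}`.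
Straightness of `M` enters only through the Riesz decomposition property: `v ≤ u₁ ⊕ u₂` splits
as `v = v₁ ⊕ v₂` with `vᵢ ≤ uᵢ`. It makes the inf-convolution monotone and lets two
decompositions of `v` be merged into one; since `k` is totally ordered, the infimum of a set of
sums `a ⊕ b` is then at most `inf A ⊕ inf B`, which gives additivity and distributivity.

In `Loc(M)` the infimum of `S` and `T` is the lower closure of the additive closure of `S ∪ T`.
By Riesz decomposition, an element below a sum of generators of `S₁ ∨ T` and below a sum of
generators of `S₂ ∨ T` splits into pieces each lying in `S₁ ∩ S₂` or in `T`.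
-/

section CanonicalOrder

variable {A : Type*} [TropSemigroup A]

theorem tle_refl (a : A) : tle a a := TropSemigroup.add_idem a

theorem tle_trans {a b c : A} (hab : tle a b) (hbc : tle b c) : tle a c := by
  unfold tle at *
  rw [← hbc, ← add_assoc, hab]

theorem tle_antisymm {a b : A} (hab : tle a b) (hba : tle b a) : a = b :=
  calc a = b + a := hba.symm
    _ = a + b := add_comm b a
    _ = b := hab

theorem tle_add_left (a b : A) : tle a (a + b) := by
  show a + (a + b) = a + b
  rw [← add_assoc, TropSemigroup.add_idem]

theorem tle_add_right (a b : A) : tle b (a + b) :=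
  add_comm b a ▸ tle_add_left b a

theorem add_tle {a b c : A} (hac : tle a c) (hbc : tle b c) : tle (a + b) c := by
  show a + b + c = c
  rw [add_assoc, hbc, hac]

theorem add_tle_add {a b c d : A} (hab : tle a b) (hcd : tle c d) : tle (a + c) (b + d) := by
  show a + c + (b + d) = b + d
  rw [add_add_add_comm, hab, hcd]

theorem zero_tle (a : A) : tle 0 a := zero_add a

theorem tle_sum {ι : Type*} {s : Finset ι} {i : ι} (hi : i ∈ s) (f : ι → A) :
    tle (f i) (∑ j ∈ s, f j) := by
  classical
  rw [← Finset.add_sum_erase s f hi]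
  exact tle_add_left _ _

theorem isTInf_unique {v w z z' : A} (h : IsTInf v w z) (h' : IsTInf v w z') : z = z' :=
  tle_antisymm (h'.2.2 z h.1 h.2.1) (h.2.2 z' h'.1 h'.2.1)

theorem isTInf_of_tle {v w : A} (h : tle w v) : IsTInf v w w :=
  ⟨h, tle_refl w, fun _ _ hy => hy⟩

def IsTGLB (S : Set A) (c : A) : Prop :=
  (∀ x ∈ S, tle c x) ∧ ∀ d, (∀ x ∈ S, tle d x) → tle d c

theorem straight_of_isTInf (inf : A → A → A) (hinf : ∀ v w, IsTInf v w (inf v w))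
    (hdistrib : ∀ v₁ v₂ w, tle (inf (v₁ + v₂) w) (inf v₁ w + inf v₂ w)) : Straight A := by
  refine ⟨fun v w => ⟨inf v w, hinf v w⟩, fun v₁ v₂ w z₁ z₂ h₁ h₂ => ?_⟩
  rw [isTInf_unique h₁ (hinf v₁ w), isTInf_unique h₂ (hinf v₂ w)]
  exact ⟨add_tle_add (hinf v₁ w).1 (hinf v₂ w).1, add_tle (hinf v₁ w).2.1 (hinf v₂ w).2.1,
    fun y hy₁ hy₂ => tle_trans ((hinf _ w).2.2 y hy₁ hy₂) (hdistrib v₁ v₂ w)⟩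

end CanonicalOrder

section RieszDecomposition

variable {M : Type*} [TropSemigroup M]

theorem Straight.exists_decomp (hM : Straight M) {v u₁ u₂ : M} (h : tle v (u₁ + u₂)) :
    ∃ v₁ v₂, tle v₁ u₁ ∧ tle v₂ u₂ ∧ v₁ + v₂ = v := by
  obtain ⟨z₁, hz₁⟩ := hM.1 u₁ v
  obtain ⟨z₂, hz₂⟩ := hM.1 u₂ v
  exact ⟨z₁, z₂, hz₁.1, hz₂.1, isTInf_unique (hM.2 _ _ _ _ _ hz₁ hz₂) (isTInf_of_tle h)⟩

theorem Straight.exists_merge_decomp (hM : Straight M) {v v₁ v₂ w₁ w₂ : M}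
    (hv : v₁ + v₂ = v) (hw : w₁ + w₂ = v) :
    ∃ x, tle x v₁ ∧ tle x w₁ ∧ x + (v₂ + w₂) = v := by
  have hw₂ : tle w₂ v := hw ▸ tle_add_right w₁ w₂
  have hv' : v₁ + (v₂ + w₂) = v := by rw [← add_assoc, hv, add_comm]; exact hw₂
  have hw₁ : tle w₁ (v₁ + (v₂ + w₂)) := hv' ▸ hw ▸ tle_add_left w₁ w₂
  obtain ⟨x, y, hx, hy, hxy⟩ := hM.exists_decomp hw₁
  refine ⟨x, hx, hxy ▸ tle_add_left x y, tle_antisymm ?_ ?_⟩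
  · exact hv' ▸ add_tle_add hx (tle_refl _)
  · rw [← hw, ← hxy, add_assoc]
    exact add_tle_add (tle_refl x) (add_tle hy (tle_add_right v₂ w₂))

theorem Straight.tle_closure_induction (hM : Straight M) {A L W : Set M}
    (hL : ∀ v w, tle v w → w ∈ L → v ∈ L) (hW : ∀ v ∈ W, ∀ w ∈ W, v + w ∈ W)
    (hA : ∀ a ∈ A, ∀ v, tle v a → v ∈ L → v ∈ W) {u : M}
    (hu : u ∈ AddSubsemigroup.closure A) {v : M} (hvu : tle v u) (hvL : v ∈ L) : v ∈ W := by
  induction hu using AddSubsemigroup.closure_induction generalizing v with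
  | mem a ha => exact hA a ha v hvu hvL
  | add u₁ u₂ _ _ ih₁ ih₂ =>
    obtain ⟨v₁, v₂, h₁, h₂, rfl⟩ := hM.exists_decomp hvu
    exact hW _ (ih₁ h₁ (hL _ _ (tle_add_left v₁ v₂) hvL)) _
      (ih₂ h₂ (hL _ _ (tle_add_right v₁ v₂) hvL))

end RieszDecomposition

section Scalars

variable {k : Type*} [TropSemifield k]

theorem mul_tinv {a : k} (ha : a ≠ 0) : a * tinv a = 1 := by
  unfold tinv
  rw [dif_neg ha]
  exact Classical.choose_spec (TropSemifield.exists_inv a ha)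

theorem mul_tle_mul_left {a b : k} (c : k) (h : tle a b) : tle (c * a) (c * b) := by
  show c * a + c * b = c * b
  rw [← mul_add, h]

theorem TotallyOrderedTSF.add_eq_or (hto : TotallyOrderedTSF k) (a b : k) :
    a + b = a ∨ a + b = b :=
  (hto a b).elim Or.inr fun h => Or.inl ((add_comm a b).trans h)

theorem IsTGLB.tle_add (hto : TotallyOrderedTSF k) {A B C : Set k} {a₀ b₀ c₀ : k}
    (hC : IsTGLB C c₀) (hA : IsTGLB A a₀) (hB : IsTGLB B b₀)
    (h : ∀ a ∈ A, ∀ b ∈ B, ∃ c ∈ C, tle c (a + b)) : tle c₀ (a₀ + b₀) := by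
  by_contra hne
  have hA' : ∃ a ∈ A, ¬ tle c₀ a := by
    by_contra! hA'
    exact hne (tle_trans (hA.2 c₀ hA') (tle_add_left a₀ b₀))
  have hB' : ∃ b ∈ B, ¬ tle c₀ b := by
    by_contra! hB'
    exact hne (tle_trans (hB.2 c₀ hB') (tle_add_right a₀ b₀))
  obtain ⟨a, ha, hca⟩ := hA'
  obtain ⟨b, hb, hcb⟩ := hB'
  obtain ⟨c, hc, hcab⟩ := h a ha b hb
  have hc₀ := tle_trans (hC.1 c hc) hcab
  rcases hto.add_eq_or a b with hab | hab <;> rw [hab] at hc₀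
  exacts [hca hc₀, hcb hc₀]

end Scalars

namespace TropHom

variable {k M N : Type*} [TropSemifield k] [TropSemigroup M] [TropModule k M]
  [TropSemigroup N] [TropModule k N]

theorem tle_iff {f g : TropHom k M N} : tle f g ↔ ∀ v, tle (f.toFun v) (g.toFun v) :=
  ⟨fun h v => congrArg (fun F => TropHom.toFun F v) h, fun h => ext' h⟩

theorem map_tle (f : TropHom k M N) {v w : M} (h : tle v w) : tle (f.toFun v) (f.toFun w) := by
  show f.toFun v + f.toFun w = f.toFun w
  rw [← f.map_add', show v + w = w from h]

end TropHom

section InfConvolution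

variable {k M : Type*} [TropSemifield k] [TropSemigroup M] [TropModule k M]

def decompValues (ξ η : TropHom k M k) (v : M) : Set k :=
  {c | ∃ v₁ v₂, v₁ + v₂ = v ∧ ξ.toFun v₁ + η.toFun v₂ = c}

theorem decompValues_nonempty (ξ η : TropHom k M k) (v : M) : (decompValues ξ η v).Nonempty :=
  ⟨_, v, 0, add_zero v, rfl⟩

noncomputable def infConvFun (hqc : QuasiCompleteTSF k) (ξ η : TropHom k M k) (v : M) : k :=
  (hqc _ (decompValues_nonempty ξ η v)).choose

variable {hqc : QuasiCompleteTSF k} {ξ η : TropHom k M k}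

theorem isTGLB_infConvFun (v : M) : IsTGLB (decompValues ξ η v) (infConvFun hqc ξ η v) :=
  (hqc _ (decompValues_nonempty ξ η v)).choose_spec

theorem infConvFun_tle {v v₁ v₂ : M} (hv : v₁ + v₂ = v) :
    tle (infConvFun hqc ξ η v) (ξ.toFun v₁ + η.toFun v₂) :=
  (isTGLB_infConvFun v).1 _ ⟨v₁, v₂, hv, rfl⟩

theorem tle_infConvFun {v : M} {c : k}
    (h : ∀ v₁ v₂, v₁ + v₂ = v → tle c (ξ.toFun v₁ + η.toFun v₂)) :
    tle c (infConvFun hqc ξ η v) :=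
  (isTGLB_infConvFun v).2 c (by rintro _ ⟨v₁, v₂, hv, rfl⟩; exact h v₁ v₂ hv)

theorem infConvFun_tle_left (v : M) : tle (infConvFun hqc ξ η v) (ξ.toFun v) := by
  simpa only [η.map_zero', add_zero] using infConvFun_tle (hqc := hqc) (ξ := ξ) (η := η)
    (add_zero v)

theorem infConvFun_tle_right (v : M) : tle (infConvFun hqc ξ η v) (η.toFun v) := by
  simpa only [ξ.map_zero', zero_add] using infConvFun_tle (hqc := hqc) (ξ := ξ) (η := η)
    (zero_add v)

theorem infConvFun_zero : infConvFun hqc ξ η 0 = 0 :=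
  tle_antisymm (ξ.map_zero' ▸ infConvFun_tle_left 0) (zero_tle _)

theorem infConvFun_mono (hM : Straight M) {v w : M} (h : tle v w) :
    tle (infConvFun hqc ξ η v) (infConvFun hqc ξ η w) :=
  tle_infConvFun fun u₁ u₂ hu => by
    obtain ⟨v₁, v₂, h₁, h₂, hv⟩ := hM.exists_decomp (hu ▸ h)
    exact tle_trans (infConvFun_tle hv) (add_tle_add (ξ.map_tle h₁) (η.map_tle h₂))

theorem infConvFun_add (hto : TotallyOrderedTSF k) (hM : Straight M) (v w : M) :
    infConvFun hqc ξ η (v + w) = infConvFun hqc ξ η v + infConvFun hqc ξ η w := by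
  refine tle_antisymm ((isTGLB_infConvFun _).tle_add hto (isTGLB_infConvFun v)
    (isTGLB_infConvFun w) ?_) (add_tle (infConvFun_mono hM (tle_add_left v w))
      (infConvFun_mono hM (tle_add_right v w)))
  rintro _ ⟨v₁, v₂, hv, rfl⟩ _ ⟨w₁, w₂, hw, rfl⟩
  refine ⟨_, ⟨v₁ + w₁, v₂ + w₂, by rw [add_add_add_comm, hv, hw], rfl⟩, ?_⟩
  rw [ξ.map_add', η.map_add', add_add_add_comm]
  exact tle_refl _

theorem mul_infConvFun_tle {a b : k} (hab : a * b = 1) (v : M) :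
    tle (a * infConvFun hqc ξ η v) (infConvFun hqc ξ η (a • v)) :=
  tle_infConvFun fun u₁ u₂ hu => by
    have hv : b • u₁ + b • u₂ = v := by
      rw [← TropModule.smul_add, hu, ← TropModule.mul_smul, mul_comm b a, hab,
        TropModule.one_smul]
    have hscale : a * (ξ.toFun (b • u₁) + η.toFun (b • u₂)) = ξ.toFun u₁ + η.toFun u₂ := by
      rw [ξ.map_smul', η.map_smul', smul_eq_mul, smul_eq_mul, mul_add, ← mul_assoc,
        ← mul_assoc, hab, one_mul, one_mul]
    exact hscale ▸ mul_tle_mul_left a (infConvFun_tle hv)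

theorem infConvFun_smul (a : k) (v : M) :
    infConvFun hqc ξ η (a • v) = a * infConvFun hqc ξ η v := by
  by_cases ha : a = 0
  · rw [ha, TropModule.zero_smul, zero_mul, infConvFun_zero]
  have h₁ : a * tinv a = 1 := mul_tinv ha
  have h₂ : tinv a * a = 1 := mul_comm a (tinv a) ▸ h₁
  refine tle_antisymm ?_ (mul_infConvFun_tle h₁ v)
  have h := mul_tle_mul_left a (mul_infConvFun_tle (hqc := hqc) (ξ := ξ) (η := η) h₂ (a • v))
  rwa [← mul_assoc, h₁, one_mul, ← TropModule.mul_smul, h₂, TropModule.one_smul] at h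

noncomputable def infConv (hto : TotallyOrderedTSF k) (hqc : QuasiCompleteTSF k)
    (hM : Straight M) (ξ η : TropHom k M k) : TropHom k M k where
  toFun := infConvFun hqc ξ η
  map_zero' := infConvFun_zero
  map_add' := infConvFun_add hto hM
  map_smul' := infConvFun_smul

theorem isTInf_infConv (hto : TotallyOrderedTSF k) (hqc : QuasiCompleteTSF k) (hM : Straight M)
    (ξ η : TropHom k M k) : IsTInf ξ η (infConv hto hqc hM ξ η) := by
  refine ⟨TropHom.tle_iff.2 (infConvFun_tle_left (hqc := hqc)),
    TropHom.tle_iff.2 (infConvFun_tle_right (hqc := hqc)),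
    fun y hξ hη => TropHom.tle_iff.2 fun v => tle_infConvFun (hqc := hqc) fun v₁ v₂ hv => ?_⟩
  rw [← hv, y.map_add']
  exact add_tle_add (TropHom.tle_iff.1 hξ v₁) (TropHom.tle_iff.1 hη v₂)

theorem infConv_add_tle (hto : TotallyOrderedTSF k) (hqc : QuasiCompleteTSF k) (hM : Straight M)
    (ξ₁ ξ₂ η : TropHom k M k) :
    tle (infConv hto hqc hM (ξ₁ + ξ₂) η) (infConv hto hqc hM ξ₁ η + infConv hto hqc hM ξ₂ η) := by
  refine TropHom.tle_iff.2 fun v => ?_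
  show tle (infConvFun hqc (ξ₁ + ξ₂) η v) (infConvFun hqc ξ₁ η v + infConvFun hqc ξ₂ η v)
  refine (isTGLB_infConvFun v).tle_add hto (isTGLB_infConvFun v) (isTGLB_infConvFun v) ?_
  rintro _ ⟨v₁, v₂, hv, rfl⟩ _ ⟨w₁, w₂, hw, rfl⟩
  obtain ⟨x, hx₁, hx₂, hx⟩ := hM.exists_merge_decomp hv hw
  refine ⟨_, ⟨x, v₂ + w₂, hx, rfl⟩, ?_⟩
  show tle (ξ₁.toFun x + ξ₂.toFun x + η.toFun (v₂ + w₂)) _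
  rw [η.map_add', add_add_add_comm (ξ₁.toFun v₁)]
  exact add_tle_add (add_tle_add (ξ₁.map_tle hx₁) (ξ₂.map_tle hx₂)) (tle_refl _)

theorem straight_dual (hto : TotallyOrderedTSF k) (hqc : QuasiCompleteTSF k) (hM : Straight M) :
    Straight (TropHom k M k) :=
  straight_of_isTInf (infConv hto hqc hM) (isTInf_infConv hto hqc hM) (infConv_add_tle hto hqc hM)

end InfConvolution

section Span

variable {k M : Type*} [TropSemifield k] [TropSemigroup M] [TropModule k M]

def tspan (k : Type*) {M : Type*} [TropSemifield k] [TropSemigroup M] [TropModule k M]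
    (S : Set M) : Set M :=
  {v | ∃ (r : ℕ) (a : Fin r → k) (x : Fin r → M), (∀ i, x i ∈ S) ∧ v = ∑ i, a i • x i}

theorem IsTSubmodule.sum_mem {N : Set M} (hN : IsTSubmodule k N) {ι : Type*} (s : Finset ι)
    {f : ι → M} (hf : ∀ i ∈ s, f i ∈ N) : ∑ i ∈ s, f i ∈ N :=
  AddSubmonoid.sum_mem ⟨⟨N, fun {v w} hv hw => hN.add_mem v hv w hw⟩, hN.zero_mem⟩ hf

theorem isTSubmodule_tspan (S : Set M) : IsTSubmodule k (tspan k S) where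
  zero_mem := ⟨0, Fin.elim0, Fin.elim0, fun i => i.elim0, by simp⟩
  add_mem := by
    rintro _ ⟨r, a, x, hx, rfl⟩ _ ⟨s, b, y, hy, rfl⟩
    refine ⟨r + s, Fin.append a b, Fin.append x y, fun i => ?_, ?_⟩
    · refine Fin.addCases (fun i => ?_) (fun i => ?_) i
      · simpa only [Fin.append_left] using hx i
      · simpa only [Fin.append_right] using hy i
    · simp only [Fin.sum_univ_add, Fin.append_left, Fin.append_right]
  smul_mem := by
    rintro c _ ⟨r, a, x, hx, rfl⟩
    refine ⟨r, fun i => c * a i, x, hx, ?_⟩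
    simp only [tsmul_sum, TropModule.mul_smul]

theorem subset_tspan (S : Set M) : S ⊆ tspan k S :=
  fun x hx => ⟨1, fun _ => 1, fun _ => x, fun _ => hx, by simp [TropModule.one_smul]⟩

theorem TGenerates.of_subset_tspan {S T : Set M} (hS : TGenerates k S) (hST : S ⊆ tspan k T) :
    TGenerates k T := fun v => by
  obtain ⟨r, a, x, hx, rfl⟩ := hS v
  exact (isTSubmodule_tspan T).sum_mem _ fun i _ =>
    (isTSubmodule_tspan T).smul_mem _ _ (hST (hx i))

theorem TGenerates.mono {S T : Set M} (hS : TGenerates k S) (hST : S ⊆ T) : TGenerates k T :=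
  hS.of_subset_tspan (hST.trans (subset_tspan T))

end Span

section Locators

variable {k M : Type*} [TropSemifield k] [TropSemigroup M] [TropModule k M]

theorem smul_tle_smul_right {a b : k} (v : M) (h : tle a b) : tle (a • v) (b • v) := by
  show a • v + b • v = b • v
  rw [← TropModule.add_smul, show a + b = b from h]

theorem IsLocator.inter (hto : TotallyOrderedTSF k) {S T : Set M} (hS : IsLocator k S)
    (hT : IsLocator k T) : IsLocator k (S ∩ T) where
  lower v w hvw hw := ⟨hS.lower v w hvw hw.1, hT.lower v w hvw hw.2⟩
  add_mem v hv w hw := ⟨hS.add_mem v hv.1 w hw.1, hT.add_mem v hv.2 w hw.2⟩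
  generates := hS.generates.of_subset_tspan fun x hx => by
    obtain ⟨r, b, y, hy, rfl⟩ := hT.generates x
    refine (isTSubmodule_tspan _).sum_mem _ fun j _ => ?_
    have hjS : b j • y j ∈ S := hS.lower _ _ (tle_sum (Finset.mem_univ j) fun i => b i • y i) hx
    -- `b j • y j` lies in `S ∩ T` if `b j ≤ 1`, and `y j` does if `1 ≤ b j`
    rcases hto (b j) 1 with hb | hb
    · refine subset_tspan _ ⟨hjS, hT.lower _ _ ?_ (hy j)⟩
      simpa only [TropModule.one_smul] using smul_tle_smul_right (y j) hb
    · refine (isTSubmodule_tspan _).smul_mem _ _ (subset_tspan _ ⟨hS.lower _ _ ?_ hjS, hy j⟩)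
      simpa only [TropModule.one_smul] using smul_tle_smul_right (y j) hb

def locJoin (S T : Set M) : Set M :=
  {v | ∃ u ∈ AddSubsemigroup.closure (S ∪ T), tle v u}

theorem subset_locJoin_left (S T : Set M) : S ⊆ locJoin S T :=
  fun s hs => ⟨s, AddSubsemigroup.subset_closure (Or.inl hs), tle_refl s⟩

theorem subset_locJoin_right (S T : Set M) : T ⊆ locJoin S T :=
  fun t ht => ⟨t, AddSubsemigroup.subset_closure (Or.inr ht), tle_refl t⟩

theorem isLocator_locJoin {S T : Set M} (hS : IsLocator k S) :
    IsLocator k (locJoin S T) where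
  lower := by
    rintro v w hvw ⟨u, hu, hwu⟩
    exact ⟨u, hu, tle_trans hvw hwu⟩
  add_mem := by
    rintro v ⟨u, hu, hvu⟩ w ⟨u', hu', hwu'⟩
    exact ⟨u + u', add_mem hu hu', add_tle_add hvu hwu'⟩
  generates := hS.generates.mono (subset_locJoin_left S T)

theorem IsLocator.locJoin_subset {S T W : Set M} (hW : IsLocator k W) (hSW : S ⊆ W)
    (hTW : T ⊆ W) : locJoin S T ⊆ W := by
  rintro v ⟨u, hu, hvu⟩
  refine hW.lower v u hvu ?_
  exact (AddSubsemigroup.closure_le (S := ⟨W, fun {v w} hv hw => hW.add_mem v hv w hw⟩)).2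
    (Set.union_subset hSW hTW) hu

theorem isLocInf_locJoin {S T : Set M} (hS : IsLocator k S) :
    IsLocInf k S T (locJoin S T) :=
  ⟨isLocator_locJoin hS, subset_locJoin_left S T, subset_locJoin_right S T,
    fun _ hW hSW hTW => hW.locJoin_subset hSW hTW⟩

theorem locJoin_inter_locJoin_subset (hM : Straight M) {S₁ S₂ T W : Set M}
    (hS₁ : IsLocator k S₁) (hS₂ : IsLocator k S₂) (hT : IsLocator k T) (hW : IsLocator k W)
    (hSW : S₁ ∩ S₂ ⊆ W) (hTW : T ⊆ W) : locJoin S₁ T ∩ locJoin S₂ T ⊆ W := by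
  rintro v ⟨⟨u₁, hu₁, hvu₁⟩, ⟨u₂, hu₂, hvu₂⟩⟩
  refine hM.tle_closure_induction (L := {v | tle v u₂}) (fun _ _ h hw => tle_trans h hw)
    hW.add_mem ?_ hu₁ hvu₁ hvu₂
  rintro a (ha | ha) x hxa hxu₂
  · refine hM.tle_closure_induction (L := S₁) hS₁.lower hW.add_mem ?_ hu₂ hxu₂
      (hS₁.lower _ _ hxa ha)
    rintro b (hb | hb) y hyb hy
    · exact hSW ⟨hy, hS₂.lower _ _ hyb hb⟩
    · exact hTW (hT.lower _ _ hyb hb)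
  · exact hTW (hT.lower _ _ hxa ha)

theorem IsLocInf.inter (hto : TotallyOrderedTSF k) (hM : Straight M) {S₁ S₂ T U₁ U₂ : Set M}
    (hS₁ : IsLocator k S₁) (hS₂ : IsLocator k S₂) (hT : IsLocator k T)
    (h₁ : IsLocInf k S₁ T U₁) (h₂ : IsLocInf k S₂ T U₂) :
    IsLocInf k (S₁ ∩ S₂) T (U₁ ∩ U₂) := by
  obtain ⟨hU₁, hSU₁, hTU₁, hU₁_min⟩ := h₁
  obtain ⟨hU₂, hSU₂, hTU₂, hU₂_min⟩ := h₂
  refine ⟨hU₁.inter hto hU₂, Set.inter_subset_inter hSU₁ hSU₂, Set.subset_inter hTU₁ hTU₂,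
    fun W hW hSW hTW => ?_⟩
  have hU₁_sub := hU₁_min _ (isLocator_locJoin hS₁) (subset_locJoin_left S₁ T)
    (subset_locJoin_right S₁ T)
  have hU₂_sub := hU₂_min _ (isLocator_locJoin hS₂) (subset_locJoin_left S₂ T)
    (subset_locJoin_right S₂ T)
  exact (Set.inter_subset_inter hU₁_sub hU₂_sub).trans
    (locJoin_inter_locJoin_subset hM hS₁ hS₂ hT hW hSW hTW)

end Locators

theorem stmt11_general {k M : Type*} [TropSemifield k] [TropSemigroup M] [TropModule k M]
    (hto : TotallyOrderedTSF k) (hqc : QuasiCompleteTSF k)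
    (hM : Straight M) :
    Straight (TropHom k M k) ∧
    ((∀ S T : Set M, IsLocator k S → IsLocator k T → IsLocator k (S ∩ T)) ∧
     (∀ S T : Set M, IsLocator k S → IsLocator k T → ∃ U : Set M, IsLocInf k S T U) ∧
     ∀ S₁ S₂ T U₁ U₂ : Set M, IsLocator k S₁ → IsLocator k S₂ → IsLocator k T →
       IsLocInf k S₁ T U₁ → IsLocInf k S₂ T U₂ → IsLocInf k (S₁ ∩ S₂) T (U₁ ∩ U₂)) :=
  ⟨straight_dual hto hqc hM, fun _ _ hS hT => hS.inter hto hT,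
    fun _ T hS _ => ⟨locJoin _ T, isLocInf_locJoin hS⟩,
    fun _ _ _ _ _ hS₁ hS₂ hT h₁ h₂ => h₁.inter hto hM hS₁ hS₂ hT h₂⟩

theorem stmt11 {k M : Type*} [TropSemifield k] [TropSemigroup M] [TropModule k M]
    (hto : TotallyOrderedTSF k) (hqc : QuasiCompleteTSF k) (hrat : RationalTSF k)
    (hM : Straight M) :
    Straight (TropHom k M k) ∧
    ((∀ S T : Set M, IsLocator k S → IsLocator k T → IsLocator k (S ∩ T)) ∧
     (∀ S T : Set M, IsLocator k S → IsLocator k T → ∃ U : Set M, IsLocInf k S T U) ∧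
     ∀ S₁ S₂ T U₁ U₂ : Set M, IsLocator k S₁ → IsLocator k S₂ → IsLocator k T →
       IsLocInf k S₁ T U₁ → IsLocInf k S₂ T U₂ → IsLocInf k (S₁ ∩ S₂) T (U₁ ∩ U₂)) :=
  stmt11_general hto hqc hM
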